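/- arXiv:2509.02461 — 3 statements merged into one kernel-verified Lean document; each statement's English description precedes it below -/
import Mathlib

section
/- For nonnegative integers α, β with α + β ≥ 1, and for all r, s ≥ 0 with r + s ≥ 1, the Carlitz–Scoville numbers satisfy A(r,s|α,β) = (s+α)·A(r-1,s|α,β) + (r+β)·A(r,s-1|α,β), where A(r,s|α,β) is defined as the sum over all permutations σ of {1,…,r+s+1} with exactly r descents of α^(lrmin(σ)-1)·β^(rlmin(σ)-1). Here terms with a negative argument are zero. -/
/-!
Insert the largest letter `n + 1` into a permutation `τ` of `{1, …, n}` at one of its `n + 1`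
slots; every permutation of `{1, …, n + 1}` arises exactly once this way. The new letter is a
left-to-right minimum only in the first slot and a right-to-left minimum only in the last, so
the weight `α ^ (lrmin - 1) * β ^ (rlmin - 1)` gets multiplied by `α`, by `β`, or by `1`. The
number of descents is unchanged in the last slot and in the `des τ` slots that follow a descent,
and grows by one in the other `n - des τ` slots, among them the first. Collecting the slots gives
the factors `s + α` and `r + β`.
-/

open Finset

def pval {n : ℕ} (σ : Equiv.Perm (Fin n)) (i : ℕ) : ℕ :=
  if h : i < n then (σ ⟨i, h⟩ : ℕ) else 0

def desSet {n : ℕ} (σ : Equiv.Perm (Fin n)) : Finset ℕ :=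
  (Finset.range (n - 1)).filter (fun i => pval σ (i + 1) < pval σ i)

def des {n : ℕ} (σ : Equiv.Perm (Fin n)) : ℕ := (desSet σ).card

def maj {n : ℕ} (σ : Equiv.Perm (Fin n)) : ℕ := ∑ i ∈ desSet σ, (i + 1)

def lrmin {n : ℕ} (σ : Equiv.Perm (Fin n)) : ℕ :=
  ((Finset.range n).filter (fun i => ∀ j ∈ Finset.range i, pval σ i < pval σ j)).card

def rlmin {n : ℕ} (σ : Equiv.Perm (Fin n)) : ℕ :=
  ((Finset.range n).filter
    (fun i => ∀ j ∈ Finset.range n, i < j → pval σ i < pval σ j)).card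

def CS (α β r s : ℕ) : ℕ :=
  ∑ σ ∈ (Finset.univ : Finset (Equiv.Perm (Fin (r + s + 1)))).filter (fun σ => des σ = r),
    α ^ (lrmin σ - 1) * β ^ (rlmin σ - 1)

def skip (p i : ℕ) : ℕ := if i < p then i else i + 1

section Skip

variable {p i j : ℕ}

lemma skip_lt_skip_iff : skip p i < skip p j ↔ i < j := by
  unfold skip; split_ifs <;> omega

lemma skip_lt_self_iff : skip p i < p ↔ i < p := by
  unfold skip; split_ifs <;> omega

lemma lt_skip_iff : p < skip p i ↔ p ≤ i := by
  unfold skip; split_ifs <;> omega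

lemma skip_lt_succ_iff {n : ℕ} (hp : p ≤ n) : skip p i < n + 1 ↔ i < n := by
  unfold skip; split_ifs <;> omega

lemma forall_iff_skip (p : ℕ) {Q : ℕ → Prop} : (∀ j, Q j) ↔ Q p ∧ ∀ j, Q (skip p j) := by
  refine ⟨fun h => ⟨h p, fun j => h _⟩, fun ⟨hp, h⟩ j => ?_⟩
  rcases lt_trichotomy j p with hj | rfl | hj
  · simpa [skip, hj] using h j
  · exact hp
  · simpa [skip, show ¬ j - 1 < p by omega, show j - 1 + 1 = j by omega] using h (j - 1)

lemma Fin.val_succAbove_eq_skip {n : ℕ} (p : Fin (n + 1)) (i : Fin n) :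
    (p.succAbove i : ℕ) = skip p i := by
  unfold Fin.succAbove skip
  split_ifs <;> simp_all [Fin.lt_def]

lemma card_filter_range_succ_eq_skip (P : ℕ → Prop) [DecidablePred P] {n : ℕ} (hp : p ≤ n) :
    #{i ∈ range (n + 1) | P i} = #{i ∈ range n | P (skip p i)} + if P p then 1 else 0 := by
  rw [card_filter, card_filter, ← Fin.sum_univ_eq_sum_range, ← Fin.sum_univ_eq_sum_range,
    Fin.sum_univ_succAbove _ ⟨p, Nat.lt_succ_of_le hp⟩, add_comm]
  simp only [Fin.val_succAbove_eq_skip]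

end Skip

section InsertMax

variable {n : ℕ}

def insertMax (τ : Equiv.Perm (Fin n)) (p : Fin (n + 1)) : Equiv.Perm (Fin (n + 1)) :=
  (finSuccEquiv' p).trans ((Equiv.optionCongr τ).trans (finSuccEquiv' (Fin.last n)).symm)

@[simp]
lemma insertMax_apply_self (τ : Equiv.Perm (Fin n)) (p : Fin (n + 1)) :
    insertMax τ p p = Fin.last n := by
  simp [insertMax]

@[simp]
lemma insertMax_apply_succAbove (τ : Equiv.Perm (Fin n)) (p : Fin (n + 1)) (i : Fin n) :
    insertMax τ p (p.succAbove i) = (τ i).castSucc := by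
  simp [insertMax]

lemma insertMax_injective :
    Function.Injective (fun x : Equiv.Perm (Fin n) × Fin (n + 1) => insertMax x.1 x.2) := by
  rintro ⟨τ, p⟩ ⟨τ', p'⟩ h
  simp only at h
  obtain rfl : p = p' := by
    by_contra hne
    obtain ⟨i, rfl⟩ := Fin.exists_succAbove_eq hne
    have := insertMax_apply_self τ (p'.succAbove i)
    rw [h, insertMax_apply_succAbove] at this
    exact (Fin.castSucc_lt_last _).ne this
  obtain rfl : τ = τ' := Equiv.ext fun i =>
    Fin.castSucc_injective n <| by
      rw [← insertMax_apply_succAbove, ← insertMax_apply_succAbove, h]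
  rfl

lemma insertMax_bijective :
    Function.Bijective (fun x : Equiv.Perm (Fin n) × Fin (n + 1) => insertMax x.1 x.2) := by
  rw [Fintype.bijective_iff_injective_and_card]
  refine ⟨insertMax_injective, ?_⟩
  simp [Fintype.card_perm, Nat.factorial_succ, mul_comm]

lemma pval_lt (σ : Equiv.Perm (Fin n)) {i : ℕ} (hi : i < n) : pval σ i < n := by
  simp [pval, hi]

lemma pval_insertMax_self (τ : Equiv.Perm (Fin n)) (p : Fin (n + 1)) :
    pval (insertMax τ p) p = n := by
  simp [pval, p.isLt]

lemma pval_insertMax_skip (τ : Equiv.Perm (Fin n)) (p : Fin (n + 1)) (i : ℕ) :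
    pval (insertMax τ p) (skip p i) = pval τ i := by
  by_cases hi : i < n
  · have hpi : skip p i = (p.succAbove ⟨i, hi⟩ : ℕ) := (Fin.val_succAbove_eq_skip p ⟨i, hi⟩).symm
    rw [pval, hpi, dif_pos (Fin.isLt _), pval, dif_pos hi]
    simp
  · have : ¬ skip p i < n + 1 := by rw [skip_lt_succ_iff (Nat.lt_succ_iff.mp p.isLt)]; exact hi
    simp [pval, hi, this]

end InsertMax

section Statistics

variable {n : ℕ}

lemma lrmin_insertMax (τ : Equiv.Perm (Fin n)) (p : Fin (n + 1)) :
    lrmin (insertMax τ p) = lrmin τ + if (p : ℕ) = 0 then 1 else 0 := by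
  have hp : (p : ℕ) ≤ n := Nat.lt_succ_iff.mp p.isLt
  have hmax : (∀ j ∈ range p, pval (insertMax τ p) p < pval (insertMax τ p) j) ↔ (p : ℕ) = 0 := by
    simp only [mem_range]
    rw [forall_iff_skip p]
    simp only [lt_irrefl, skip_lt_self_iff, pval_insertMax_skip, pval_insertMax_self]
    refine ⟨fun ⟨_, h⟩ => Nat.eq_zero_of_not_pos fun hp0 => ?_, fun h0 => ?_⟩
    · exact (h 0 hp0).not_gt (pval_lt τ (by omega))
    · simp [h0]
  unfold lrmin
  rw [card_filter_range_succ_eq_skip _ hp, if_congr hmax rfl rfl]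
  congr 2
  refine filter_congr fun i hi => ?_
  simp only [mem_range] at hi ⊢
  rw [forall_iff_skip p]
  simp [pval_insertMax_skip, pval_insertMax_self, skip_lt_skip_iff, pval_lt τ hi]

lemma rlmin_insertMax (τ : Equiv.Perm (Fin n)) (p : Fin (n + 1)) :
    rlmin (insertMax τ p) = rlmin τ + if (p : ℕ) = n then 1 else 0 := by
  have hp : (p : ℕ) ≤ n := Nat.lt_succ_iff.mp p.isLt
  have hmax : (∀ j ∈ range (n + 1), (p : ℕ) < j →
      pval (insertMax τ p) p < pval (insertMax τ p) j) ↔ (p : ℕ) = n := by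
    simp only [mem_range]
    rw [forall_iff_skip p]
    simp only [lt_irrefl, lt_skip_iff, skip_lt_succ_iff hp, pval_insertMax_skip,
      pval_insertMax_self]
    refine ⟨fun ⟨_, h⟩ => by_contra fun hpn => ?_, fun hpn => ?_⟩
    · exact (h p (by omega) le_rfl).not_gt (pval_lt τ (by omega))
    · simp only [false_imp_iff, implies_true, true_and]
      intro j hj hpj
      omega
  unfold rlmin
  rw [card_filter_range_succ_eq_skip _ hp, if_congr hmax rfl rfl]
  congr 2
  refine filter_congr fun i hi => ?_
  simp only [mem_range] at hi ⊢
  rw [forall_iff_skip p]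
  simp [pval_insertMax_skip, pval_insertMax_self, skip_lt_skip_iff, skip_lt_succ_iff hp,
    pval_lt τ hi]

end Statistics

lemma card_filter_eq_or {α : Type*} [DecidableEq α] (s : Finset α) (a : α) (B : α → Prop)
    [DecidablePred B] :
    #{x ∈ s | x = a ∨ B x} = #{x ∈ s | B x} + if a ∈ s ∧ ¬ B a then 1 else 0 := by
  split_ifs with h
  · rw [← card_insert_of_notMem (s := {x ∈ s | B x}) (a := a) (by simp [h.2])]
    congr 1
    ext x
    by_cases hx : x = a <;> simp [hx, h.1]
  · refine congrArg card (filter_congr fun x hx => or_iff_right_of_imp ?_)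
    rintro rfl
    by_contra hB
    exact h ⟨hx, hB⟩

section Descents

variable {n : ℕ}

lemma des_eq_card_filter (σ : Equiv.Perm (Fin n)) :
    des σ = #{i ∈ range n | 0 < i ∧ pval σ i < pval σ (i - 1)} := by
  cases n with
  | zero => rfl
  | succ m =>
    rw [des, desSet, card_filter, card_filter, sum_range_succ']
    simp

lemma des_insertMax (τ : Equiv.Perm (Fin n)) (p : Fin (n + 1)) :
    des (insertMax τ p) =
      des τ + if (p : ℕ) < n ∧ ¬ (0 < (p : ℕ) ∧ pval τ p < pval τ (p - 1)) then 1 else 0 := by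
  have hp : (p : ℕ) ≤ n := Nat.lt_succ_iff.mp p.isLt
  have hmax : ¬ (0 < (p : ℕ) ∧
      pval (insertMax τ p) p < pval (insertMax τ p) (p - 1)) := by
    rintro ⟨hp0, h⟩
    have hskip : skip p (p - 1) = p - 1 := if_pos (by omega)
    rw [pval_insertMax_self, ← hskip, pval_insertMax_skip] at h
    exact h.not_gt (pval_lt τ (by omega))
  rw [des_eq_card_filter, des_eq_card_filter, card_filter_range_succ_eq_skip _ hp, if_neg hmax,
    add_zero]
  trans #{i ∈ range n | i = (p : ℕ) ∨ (0 < i ∧ pval τ i < pval τ (i - 1))}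
  swap
  · rw [card_filter_eq_or]
    simp only [mem_range]
  refine congrArg card (filter_congr fun i hi => ?_)
  rw [mem_range] at hi
  by_cases hip : i = p
  · subst hip
    have hskip : skip p p - 1 = p := by simp [skip]
    rw [pval_insertMax_skip, hskip, pval_insertMax_self]
    simp [skip, pval_lt τ hi]
  · have hskip : 0 < i → skip p i - 1 = skip p (i - 1) := by unfold skip; split_ifs <;> omega
    have hpos : 0 < skip p i ↔ 0 < i := by unfold skip; split_ifs <;> omega
    rw [hpos]
    constructor
    · rintro ⟨hi0, h⟩
      rw [hskip hi0, pval_insertMax_skip, pval_insertMax_skip] at h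
      exact Or.inr ⟨hi0, h⟩
    · rintro (h | ⟨hi0, h⟩)
      · exact absurd h hip
      · rw [hskip hi0, pval_insertMax_skip, pval_insertMax_skip]
        exact ⟨hi0, h⟩

lemma des_le (σ : Equiv.Perm (Fin n)) : des σ ≤ n - 1 := by
  exact (card_filter_le _ _).trans_eq (card_range _)

end Descents

lemma sum_range_succ_slot_weights {n d r : ℕ} (α β : ℕ) (B : ℕ → Prop) [DecidablePred B]
    (hn : 0 < n) (hB : ¬ B 0) (hd : #{p ∈ range n | B p} = d) :
    ∑ p ∈ range (n + 1), (if d + (if p < n ∧ ¬ B p then 1 else 0) = r then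
        (if p = 0 then α else 1) * (if p = n then β else 1) else 0) =
      (if d + 1 = r then n - r + α else 0) + (if d = r then r + β else 0) := by
  have hslot : ∀ p ∈ range n, (if d + (if p < n ∧ ¬ B p then 1 else 0) = r then
        (if p = 0 then α else 1) * (if p = n then β else 1) else 0) =
      if B p then (if d = r then 1 else 0) else if d + 1 = r then (if p = 0 then α else 1) else 0 := by
    intro p hp
    rw [mem_range] at hp
    by_cases hBp : B p
    · have hp0 : p ≠ 0 := by rintro rfl; exact hB hBp
      simp [hBp, hp, hp.ne, hp0]
    · simp [hBp, hp, hp.ne]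
  have hfirst : ∑ p ∈ range n with ¬ B p, (if p = 0 then α else 1) = α + (n - d - 1) := by
    have h0 : 0 ∈ {p ∈ range n | ¬ B p} := by simp [hn, hB]
    have hcard : #{p ∈ range n | ¬ B p} = n - d := by
      rw [filter_not, card_sdiff_of_subset (filter_subset _ _), card_range, hd]
    rw [← add_sum_erase _ _ h0, if_pos rfl, sum_congr rfl fun p hp => if_neg (ne_of_mem_erase hp),
      sum_const, card_erase_of_mem h0, hcard, smul_eq_mul, mul_one]
  rw [sum_range_succ, sum_congr rfl hslot, sum_ite, sum_const, hd, smul_eq_mul]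
  simp only [sum_ite_irrel, hfirst, sum_const_zero, lt_irrefl, false_and, if_false, add_zero,
    hn.ne', if_true, one_mul]
  split_ifs <;> omega

section Weights

variable (α β : ℕ) {n : ℕ}

def csWeight (σ : Equiv.Perm (Fin n)) : ℕ := α ^ (lrmin σ - 1) * β ^ (rlmin σ - 1)

def csSum (n r : ℕ) : ℕ := ∑ σ : Equiv.Perm (Fin n) with des σ = r, csWeight α β σ

lemma CS_eq_csSum (r s : ℕ) : CS α β r s = csSum α β (r + s + 1) r := rfl

lemma csWeight_insertMax (hn : 0 < n) (τ : Equiv.Perm (Fin n)) (p : Fin (n + 1)) :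
    csWeight α β (insertMax τ p) =
      (if (p : ℕ) = 0 then α else 1) * (if (p : ℕ) = n then β else 1) * csWeight α β τ := by
  have hlr : 0 < lrmin τ := card_pos.mpr ⟨0, by simp [hn]⟩
  have hrl : 0 < rlmin τ := card_pos.mpr ⟨n - 1, by
    simp only [mem_filter, mem_range]
    exact ⟨by omega, fun j hj hlt => absurd hlt (by omega)⟩⟩
  rw [csWeight, csWeight, lrmin_insertMax, rlmin_insertMax]
  obtain ⟨a, ha⟩ : ∃ a, lrmin τ = a + 1 := ⟨_, (Nat.succ_pred_eq_of_pos hlr).symm⟩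
  obtain ⟨b, hb⟩ : ∃ b, rlmin τ = b + 1 := ⟨_, (Nat.succ_pred_eq_of_pos hrl).symm⟩
  rw [ha, hb]
  split_ifs <;> simp only [add_zero, Nat.add_sub_cancel, pow_succ] <;> ring

lemma sum_insertMax_csWeight (hn : 0 < n) (τ : Equiv.Perm (Fin n)) (r : ℕ) :
    ∑ p : Fin (n + 1), (if des (insertMax τ p) = r then csWeight α β (insertMax τ p) else 0) =
      ((if des τ + 1 = r then n - r + α else 0) + (if des τ = r then r + β else 0)) *
        csWeight α β τ := by
  rw [← sum_range_succ_slot_weights α β _ hn (by simp) (des_eq_card_filter τ).symm, sum_mul,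
    ← Fin.sum_univ_eq_sum_range]
  refine sum_congr rfl fun p _ => ?_
  rw [des_insertMax, csWeight_insertMax α β hn, ite_zero_mul]

lemma csSum_eq_zero_of_le (hn : 0 < n) {r : ℕ} (hr : n ≤ r) : csSum α β n r = 0 :=
  sum_eq_zero fun σ hσ => absurd (mem_filter.mp hσ).2 (by have := des_le σ; omega)

lemma csSum_succ (hn : 0 < n) (r : ℕ) :
    csSum α β (n + 1) r =
      (n - r + α) * (if r = 0 then 0 else csSum α β n (r - 1)) + (r + β) * csSum α β n r := by
  have hprev : ∑ τ : Equiv.Perm (Fin n) with des τ + 1 = r, csWeight α β τ =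
      if r = 0 then 0 else csSum α β n (r - 1) := by
    split_ifs with hr
    · exact sum_eq_zero fun τ hτ => absurd (mem_filter.mp hτ).2 (by omega)
    · exact sum_congr (filter_congr fun τ _ => by omega) fun _ _ => rfl
  calc csSum α β (n + 1) r
      = ∑ x : Equiv.Perm (Fin n) × Fin (n + 1),
          if des (insertMax x.1 x.2) = r then csWeight α β (insertMax x.1 x.2) else 0 := by
        rw [csSum, sum_filter]
        exact (Fintype.sum_bijective _ insertMax_bijective _ _ fun _ => rfl).symm
    _ = ∑ τ : Equiv.Perm (Fin n),
          ((if des τ + 1 = r then n - r + α else 0) + (if des τ = r then r + β else 0)) *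
            csWeight α β τ := by
        rw [Fintype.sum_prod_type]
        exact sum_congr rfl fun τ _ => sum_insertMax_csWeight α β hn τ r
    _ = _ := by
        simp only [add_mul, sum_add_distrib, ite_mul, zero_mul, ← sum_filter, ← mul_sum, hprev,
          csSum]

end Weights

theorem carlitz_scoville_recurrence_general (α β r s : ℕ) (hrs : 1 ≤ r + s) :
    CS α β r s =
      (s + α) * (if r = 0 then 0 else CS α β (r - 1) s) +
      (r + β) * (if s = 0 then 0 else CS α β r (s - 1)) := by
  rw [CS_eq_csSum, csSum_succ α β hrs, Nat.add_sub_cancel_left]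
  congr 2
  · split_ifs with hr
    · rfl
    · rw [CS_eq_csSum, show r - 1 + s + 1 = r + s by omega]
  · split_ifs with hs
    · subst hs
      exact csSum_eq_zero_of_le α β hrs le_rfl
    · rw [CS_eq_csSum, show r + (s - 1) + 1 = r + s by omega]

theorem carlitz_scoville_recurrence (α β r s : ℕ) (hab : 1 ≤ α + β) (hrs : 1 ≤ r + s) :
    CS α β r s =
      (s + α) * (if r = 0 then 0 else CS α β (r - 1) s) +
      (r + β) * (if s = 0 then 0 else CS α β r (s - 1)) :=
  carlitz_scoville_recurrence_general α β r s hrs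
end

section
/- Let E_{n,k}(α,β,q) be defined by E_{0,0} = 1 and E_{n,k} = q^(β+k-1)[n-k+α]·E_{n-1,k-1} + [k+β]·E_{n-1,k} (with E_{n,k} = 0 if k < 0 or k > n), and set E_n(x;q) = Σ_{k=0}^n E_{n,k}(α,β,q) x^k. Then for n ≥ 1, E_n(x;q) = ([β] + q^β [n-1+α] x)·E_{n-1}(x;q) + (1-x)·x·q^β·δ_x(E_{n-1}(x;q)), where δ_x p(x) = (p(qx) - p(x))/((q-1)x) is the q-derivative. -/
open Finset

noncomputable section

abbrev K : Type := RatFunc ℚ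

def qq : K := RatFunc.X

def qint (m : ℕ) : K := ∑ i ∈ Finset.range m, qq ^ i

def qfact (m : ℕ) : K := ∏ i ∈ Finset.range m, qint (i + 1)

def qbinom (a b : ℕ) : K := qfact a / (qfact b * qfact (a - b))

def E (α β : ℕ) : ℕ → ℕ → K
  | 0, k => if k = 0 then 1 else 0
  | n + 1, 0 => qint β * E α β n 0
  | n + 1, k + 1 =>
      qq ^ (β + k) * qint (n - k + α) * E α β n k + qint (k + 1 + β) * E α β n (k + 1)

def poch (N : ℕ) : PowerSeries K :=
  ∏ i ∈ Finset.range N, (1 - PowerSeries.C (R := K) (qq ^ i) * PowerSeries.X)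

abbrev F : Type := RatFunc K

def x : F := RatFunc.X

def qF : F := algebraMap K F qq

def Enx (α β n : ℕ) : Polynomial K :=
  ∑ k ∈ Finset.range (n + 1), Polynomial.C (E α β n k) * Polynomial.X ^ k

/-- Evaluation of `E_n(x;q)` at an element of the rational function field `ℚ(q)(x)`. -/
def Eval (α β n : ℕ) (y : F) : F := Polynomial.aeval y (Enx α β n)

/-- The q-derivative `δ_x p(x) = (p(qx) - p(x))/((q-1)x)` of `E_{n-1}(x;q)`. -/
def qDerivE (α β n : ℕ) : F :=
  (Eval α β n (qF * x) - Eval α β n x) / ((qF - 1) * x)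

/-! On monomials `x δ_x x^k = [k] x^k`, so the right-hand side is a polynomial in `x` whose
coefficients can be read off directly. Splitting `[k+1+β] = [β] + q^β [k+1]` and
`[m+α] = [k] + q^k [m-k+α]` (for `k ≤ m`; beyond that all coefficients vanish) turns them into the
defining recurrence of `E_{m+1,k+1}`. -/

open Polynomial

lemma qq_ne_one : qq ≠ 1 := by
  rw [qq, ← RatFunc.algebraMap_X, ← map_one (algebraMap ℚ[X] (RatFunc ℚ))]
  exact (IsFractionRing.injective ℚ[X] (RatFunc ℚ)).ne fun h => by simpa using congrArg natDegree h

lemma qint_add (a b : ℕ) : qint (a + b) = qint a + qq ^ a * qint b := by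
  simp [qint, sum_range_add, pow_add, mul_sum]

lemma sub_one_mul_qint (k : ℕ) : (qq - 1) * qint k = qq ^ k - 1 := by
  rw [qint, mul_comm, geom_sum_mul]

lemma E_eq_zero_of_lt (α β : ℕ) {n k : ℕ} (h : n < k) : E α β n k = 0 := by
  induction n generalizing k with
  | zero => simp [E, Nat.pos_iff_ne_zero.mp h]
  | succ m ih =>
    obtain ⟨k, rfl⟩ := Nat.exists_eq_add_of_lt (Nat.zero_lt_of_lt h)
    simp [E, ih (by omega : m < k), ih (by omega : m < k + 1)]

lemma coeff_Enx (α β n k : ℕ) : (Enx α β n).coeff k = E α β n k := by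
  simp only [Enx, finsetSum_coeff, coeff_C_mul_X_pow, sum_ite_eq, mem_range]
  split_ifs with h
  · rfl
  · exact (E_eq_zero_of_lt α β (by omega)).symm

/-- `x δ_x`, the q-analogue of the Euler operator `x d/dx`. -/
def qEuler (p : K[X]) : K[X] :=
  ∑ k ∈ range (p.natDegree + 1), C (qint k * p.coeff k) * X ^ k

lemma coeff_qEuler (p : K[X]) (n : ℕ) : (qEuler p).coeff n = qint n * p.coeff n := by
  simp only [qEuler, finsetSum_coeff, coeff_C_mul_X_pow, sum_ite_eq, mem_range]
  split_ifs with h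
  · rfl
  · rw [coeff_eq_zero_of_natDegree_lt (by omega), mul_zero]

lemma aeval_qq_mul_sub_aeval {A : Type*} [CommRing A] [Algebra K A] (p : K[X]) (y : A) :
    aeval (algebraMap K A qq * y) p - aeval y p = (algebraMap K A qq - 1) * aeval y (qEuler p) := by
  rw [aeval_eq_sum_range, aeval_eq_sum_range, qEuler, map_sum, mul_sum, ← sum_sub_distrib]
  refine sum_congr rfl fun k _ => ?_
  have hgeom := congrArg (algebraMap K A) (sub_one_mul_qint k)
  simp only [map_mul, map_sub, map_pow, map_one] at hgeom
  simp only [map_mul, aeval_C, aeval_X_pow, Algebra.smul_def, mul_pow]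
  linear_combination -(algebraMap K A (p.coeff k) * y ^ k) * hgeom

lemma qDerivE_eq (α β n : ℕ) : qDerivE α β n = aeval x (qEuler (Enx α β n)) / x := by
  have hq : qF - 1 ≠ 0 := sub_ne_zero.mpr fun h =>
    qq_ne_one ((algebraMap K F).injective (by rw [map_one]; exact h))
  rw [qDerivE, Eval, Eval, qF, aeval_qq_mul_sub_aeval, ← qF, mul_div_mul_left _ _ hq]

lemma E_succ_succ_eq (α β m k : ℕ) :
    E α β (m + 1) (k + 1) = qint β * E α β m (k + 1) + qq ^ β * qint (m + α) * E α β m k +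
      qq ^ β * (qint (k + 1) * E α β m (k + 1) - qint k * E α β m k) := by
  rcases le_or_gt k m with hk | hk
  · have hsplit : qint (m + α) = qint k + qq ^ k * qint (m - k + α) := by
      rw [← qint_add]; congr 1; omega
    rw [E, hsplit, add_comm (k + 1) β, qint_add β]
    ring
  · simp [E_eq_zero_of_lt α β hk, E_eq_zero_of_lt α β (by omega : m < k + 1),
      E_eq_zero_of_lt α β (by omega : m + 1 < k + 1)]

lemma Enx_succ (α β m : ℕ) :
    Enx α β (m + 1) = (C (qint β) + C (qq ^ β * qint (m + α)) * X) * Enx α β m +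
      C (qq ^ β) * (1 - X) * qEuler (Enx α β m) := by
  ext (_ | k) <;>
    simp only [add_mul, sub_mul, one_mul, mul_assoc, coeff_add, coeff_sub, coeff_C_mul,
      coeff_X_mul, coeff_X_mul_zero, coeff_Enx, coeff_qEuler]
  · simp only [E, qint, range_zero, sum_empty]
    ring
  · rw [E_succ_succ_eq]
    ring

theorem E_q_derivative_recurrence (α β n : ℕ) (hn : 1 ≤ n) :
    Eval α β n x =
      (algebraMap K F (qint β) + qF ^ β * algebraMap K F (qint (n - 1 + α)) * x) *
        Eval α β (n - 1) x +
      (1 - x) * x * qF ^ β * qDerivE α β (n - 1) := by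
  obtain ⟨m, rfl⟩ : ∃ m, n = m + 1 := ⟨n - 1, by omega⟩
  rw [Nat.add_sub_cancel, qDerivE_eq, Eval, Eval, Enx_succ]
  have hx : x ≠ 0 := RatFunc.X_ne_zero
  simp only [map_add, map_mul, map_sub, map_one, aeval_C, aeval_X, map_pow, qF]
  field_simp

end
end

section
/- For r ≥ 1 and 0 ≤ k ≤ n, the r-Eulerian numbers A(n+r, k; r), counting permutations of {1,…,n+r} whose number of r-descents equals k, satisfy A(n+r,k;r) = (k+r)·A(n+r-1,k;r) + (n+1-k)·A(n+r-1,k-1;r), with initial value A(r,0;r) = r!. -/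
open Finset

def rdesSet {m : ℕ} (r : ℕ) (σ : Equiv.Perm (Fin m)) : Finset ℕ :=
  (Finset.range (m - 1)).filter (fun i => pval σ (i + 1) + r ≤ pval σ i)

def rdes {m : ℕ} (r : ℕ) (σ : Equiv.Perm (Fin m)) : ℕ := (rdesSet r σ).card

def rEulerian (m k r : ℕ) : ℕ :=
  ((Finset.univ : Finset (Equiv.Perm (Fin m))).filter (fun σ => rdes r σ = k)).card

/-!
Encode a permutation of `Fin m` by its list of values, a rearrangement of `List.range m`. Every
rearrangement of `range (M + 1)` arises exactly once by inserting the largest value `M` into one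
of the `M + 1` gaps of a rearrangement `t` of `range M`. Inserting `M` in front of an entry `x`
creates the r-descent `(M, x)` iff `x + r ≤ M`, while an r-descent ending at `x` is destroyed;
since that one already forces `x + r ≤ M`, each insertion raises the number `d` of r-descents of
`t` by `0` or `1`. Summing over the gaps, the total gain is
`#{x < M | x + r ≤ M} - d = M + 1 - r - d`, so `t` yields `d + r` permutations with `d`
r-descents and `M + 1 - r - d` with `d + 1`.
-/

namespace List

def rdes (r : ℕ) : List ℕ → ℕ
  | a :: b :: l => (if b + r ≤ a then 1 else 0) + rdes r (b :: l)
  | _ => 0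

theorem rdes_eq_card_filter (r : ℕ) : ∀ l : List ℕ,
    l.rdes r = #{i ∈ Finset.range (l.length - 1) | l.getD (i + 1) 0 + r ≤ l.getD i 0}
  | [] => by simp [rdes]
  | [a] => by simp [rdes]
  | a :: b :: l => by
    simp only [rdes, rdes_eq_card_filter r (b :: l), Finset.card_filter,
      length_cons, Nat.add_sub_cancel, Finset.sum_range_succ' _ (l.length),
      getD_cons_succ, getD_cons_zero]
    ring

theorem sum_eq_length_mul_add_count {l : List ℕ} {d : ℕ}
    (h : ∀ x ∈ l, x = d ∨ x = d + 1) :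
    l.sum = l.length * d + l.count (d + 1) := by
  induction l with
  | nil => simp
  | cons x l ih =>
    rw [forall_mem_cons] at h
    rcases h with ⟨rfl | rfl, hl⟩ <;> simp [ih hl] <;> ring

theorem count_add_count_succ {l : List ℕ} {d : ℕ} (h : ∀ x ∈ l, x = d ∨ x = d + 1) :
    l.count d + l.count (d + 1) = l.length := by
  induction l with
  | nil => simp
  | cons x l ih =>
    rw [forall_mem_cons] at h
    rcases h with ⟨rfl | rfl, hl⟩ <;> simp [← ih hl] <;> omega

theorem sum_map_ite_eq_count {α : Type*} (l : List α) (f : α → ℕ) (k a b : ℕ) :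
    (l.map fun x => if f x = k then a else if f x + 1 = k then b else 0).sum =
      a * (l.map f).count k + b * (if k = 0 then 0 else (l.map f).count (k - 1)) := by
  induction l with
  | nil => simp
  | cons x l ih =>
    simp only [map_cons, sum_cons, ih, count_cons, beq_iff_eq]
    split_ifs <;> first | omega | ring

variable {r M : ℕ}

theorem countP_range_add_le (hr : 1 ≤ r) (hrM : r ≤ M + 1) :
    (range M).countP (· + r ≤ M) = M + 1 - r := by
  have hsplit : range M = range (M + 1 - r) ++ map (M + 1 - r + ·) (range (r - 1)) := by
    rw [← range_add]
    congr 1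
    omega
  rw [hsplit, countP_append, countP_eq_length.2, countP_eq_zero.2] <;> simp <;> omega

theorem rdes_of_mem_permutations'Aux {t l : List ℕ} (ht : ∀ x ∈ t, x < M)
    (hl : l ∈ permutations'Aux M t) : l.rdes r = t.rdes r ∨ l.rdes r = t.rdes r + 1 := by
  induction t generalizing l with
  | nil => simp_all [permutations'Aux, rdes]
  | cons a t ih =>
    rw [forall_mem_cons] at ht
    simp only [permutations'Aux, mem_cons, mem_map] at hl
    rcases hl with rfl | ⟨l, hl, rfl⟩
    · simp only [rdes]
      split_ifs <;> omega
    · rcases t with _ | ⟨b, u⟩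
      · simp only [permutations'Aux, mem_singleton] at hl
        subst hl
        simp only [rdes]
        split_ifs <;> omega
      · simp only [permutations'Aux, mem_cons, mem_map] at hl
        rcases hl with rfl | ⟨l, hl, rfl⟩
        · simp only [rdes]
          split_ifs <;> omega
        · have := ih ht.2 (l := b :: l) (by simp [permutations'Aux, hl])
          simp only [rdes] at this ⊢
          omega

theorem sum_map_rdes_permutations'Aux : ∀ {t : List ℕ}, (∀ x ∈ t, x < M) →
    ((permutations'Aux M t).map (rdes r)).sum + t.rdes r =
      (t.length + 1) * t.rdes r + t.countP (· + r ≤ M)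
  | [], _ => by simp [permutations'Aux, rdes]
  | [a], ht => by
    simpa [permutations'Aux, rdes] using Nat.lt_add_right r (ht a mem_cons_self)
  | a :: b :: u, ht => by
    have ih := sum_map_rdes_permutations'Aux (t := b :: u) fun x hx => ht x (mem_cons_of_mem a hx)
    have ha : a < M := ht a mem_cons_self
    have hMa : ¬ M + r ≤ a := by omega
    simp only [permutations'Aux, rdes, map_cons, map_map, sum_cons, Function.comp_def, hMa,
      if_false, sum_map_add, map_const', sum_replicate, length_permutations'Aux, smul_eq_mul,
      countP_cons, length_cons, decide_eq_true_eq] at ih ⊢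
    generalize (if b + r ≤ a then 1 else 0) = δ, (if a + r ≤ M then 1 else 0) = ε at *
    linear_combination ih

theorem count_map_rdes_permutations'Aux {t : List ℕ} (ht : t ~ range M) (hr : 1 ≤ r)
    (hrM : r ≤ M + 1) (k : ℕ) :
    ((permutations'Aux M t).map (rdes r)).count k =
      if t.rdes r = k then k + r else if t.rdes r + 1 = k then M + 2 - r - k else 0 := by
  have hlt : ∀ x ∈ t, x < M := fun x hx => by simpa using ht.subset hx
  have hsum := sum_map_rdes_permutations'Aux (r := r) hlt
  set xs := (permutations'Aux M t).map (rdes r)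
  set d := t.rdes r
  have hxs : ∀ x ∈ xs, x = d ∨ x = d + 1 := by
    simp only [xs, mem_map]
    rintro _ ⟨l, hl, rfl⟩
    exact rdes_of_mem_permutations'Aux hlt hl
  have hlen : xs.length = M + 1 := by simp [xs, length_permutations'Aux, ht.length_eq]
  rw [ht.countP_eq, countP_range_add_le hr hrM, ht.length_eq, length_range,
    sum_eq_length_mul_add_count hxs, hlen] at hsum
  have hcount := count_add_count_succ hxs
  rw [hlen] at hcount
  split_ifs with h₁ h₂
  · subst h₁
    omega
  · subst h₂
    omega
  · exact count_eq_zero.2 fun hk => by rcases hxs _ hk with h | h <;> omega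

end List

def permValues {m : ℕ} (σ : Equiv.Perm (Fin m)) : List ℕ := List.ofFn fun i => (σ i : ℕ)

theorem pval_eq_getD {m : ℕ} (σ : Equiv.Perm (Fin m)) (i : ℕ) :
    pval σ i = (permValues σ).getD i 0 := by
  unfold pval permValues
  split_ifs with h <;> simp [h]

theorem rdes_eq_rdes_permValues {m : ℕ} (r : ℕ) (σ : Equiv.Perm (Fin m)) :
    rdes r σ = (permValues σ).rdes r := by
  rw [List.rdes_eq_card_filter, rdes, rdesSet]
  simp [pval_eq_getD, permValues]

theorem permValues_injective {m : ℕ} : Function.Injective (permValues (m := m)) :=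
  fun _ _ h => Equiv.ext fun i => Fin.ext (congrFun (List.ofFn_injective h) i)

theorem permValues_perm {m : ℕ} (σ : Equiv.Perm (Fin m)) :
    (permValues σ).Perm (List.range m) := by
  simpa [permValues, List.ofFn_eq_map, List.map_map, Function.comp_def,
    List.map_coe_finRange_eq_range]
    using σ.map_finRange_perm.map Fin.val

theorem map_permValues_univ {m : ℕ} :
    (univ : Finset (Equiv.Perm (Fin m))).map ⟨permValues, permValues_injective⟩ =
      (List.range m).permutations.toFinset := by
  apply Finset.eq_of_subset_of_card_le
  · intro l
    simp only [mem_map, mem_univ, true_and, List.mem_toFinset, List.mem_permutations]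
    rintro ⟨σ, rfl⟩
    exact permValues_perm σ
  · rw [List.toFinset_card_of_nodup (List.nodup_permutations _ List.nodup_range),
      List.length_permutations, List.length_range, card_map, card_univ, Fintype.card_perm,
      Fintype.card_fin]

theorem rEulerian_eq_count (m k r : ℕ) :
    rEulerian m k r = ((List.range m).permutations'.map (List.rdes r)).count k := by
  let e : Equiv.Perm (Fin m) ↪ List ℕ := ⟨permValues, permValues_injective⟩
  have hperms : (List.range m).permutations.Nodup := List.nodup_permutations _ List.nodup_range
  calc rEulerian m k r = #((univ.map e).filter (List.rdes r · = k)) := by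
        simp [rEulerian, filter_map, e, rdes_eq_rdes_permValues]
    _ = ((List.range m).permutations.filter (List.rdes r · = k)).length := by
        rw [map_permValues_univ, ← List.toFinset_card_of_nodup (hperms.filter _),
          List.toFinset_filter]
        simp
    _ = ((List.range m).permutations'.map (List.rdes r)).count k := by
        rw [← List.countP_eq_length_filter, List.count, List.countP_map]
        exact (List.permutations_perm_permutations' _).countP_eq _

theorem rEulerian_succ {M k r : ℕ} (hr : 1 ≤ r) (hrM : r ≤ M + 1) :
    rEulerian (M + 1) k r =
      (k + r) * rEulerian M k r +
      (M + 2 - r - k) * (if k = 0 then 0 else rEulerian M (k - 1) r) := by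
  have hperm : (List.range (M + 1)).Perm (M :: List.range M) := by
    rw [List.range_succ]
    exact List.perm_append_singleton _ _
  have hcount : ∀ t ∈ (List.range M).permutations',
      ((List.permutations'Aux M t).map (List.rdes r)).count k =
        if t.rdes r = k then k + r else if t.rdes r + 1 = k then M + 2 - r - k else 0 :=
    fun t ht => List.count_map_rdes_permutations'Aux (List.mem_permutations'.1 ht) hr hrM k
  -- `permutations' (M :: l)` is, by definition, the list of all insertions of `M` into the
  -- members of `permutations' l`.
  rw [rEulerian_eq_count, (hperm.permutations'.map _).count_eq, List.permutations',
    List.map_flatMap, List.count_flatMap, Function.comp_def, List.map_congr_left hcount,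
    List.sum_map_ite_eq_count, rEulerian_eq_count, rEulerian_eq_count]

theorem rdes_eq_zero_of_le {m r : ℕ} (σ : Equiv.Perm (Fin m)) (h : m ≤ r) : rdes r σ = 0 := by
  rw [rdes, card_eq_zero, rdesSet, filter_eq_empty_iff]
  intro i hi
  have hi : i < m := by rw [mem_range] at hi; omega
  have : pval σ i < m := by simp [pval, hi]
  omega

theorem rEulerian_zero_of_le {m r : ℕ} (h : m ≤ r) : rEulerian m 0 r = m.factorial := by
  simp [rEulerian, rdes_eq_zero_of_le _ h, Fintype.card_perm]

theorem rEulerian_recurrence_general (r n k : ℕ) (hr : 1 ≤ r) :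
    rEulerian (n + r) k r =
      (k + r) * rEulerian (n + r - 1) k r +
      (n + 1 - k) * (if k = 0 then 0 else rEulerian (n + r - 1) (k - 1) r) ∧
    rEulerian r 0 r = Nat.factorial r := by
  refine ⟨?_, rEulerian_zero_of_le le_rfl⟩
  obtain ⟨M, hM⟩ : ∃ M, n + r = M + 1 := ⟨n + r - 1, by omega⟩
  rw [hM, Nat.add_sub_cancel, rEulerian_succ hr (by omega),
    show M + 2 - r - k = n + 1 - k by omega]

theorem rEulerian_recurrence (r n k : ℕ) (hr : 1 ≤ r) (hk : k ≤ n) :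
    rEulerian (n + r) k r =
      (k + r) * rEulerian (n + r - 1) k r +
      (n + 1 - k) * (if k = 0 then 0 else rEulerian (n + r - 1) (k - 1) r) ∧
    rEulerian r 0 r = Nat.factorial r :=
  rEulerian_recurrence_general r n k hr
end
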